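/- For all u, h ∈ L²(Ω, μ), one has |G(u + h) − G(u) − ∫_{Ω₁} φ(u)·h dμ| ≤ ‖h‖²_{L²}/(2(c₁ − c₀)). -/

import Mathlib

/-!
`F` is differentiable with `F' = phi`, and `phi` is `(c₁ - c₀)⁻¹`-Lipschitz (it is a Möbius
function of `min z c₀` whose derivative has modulus `(c₁ - c₀) / (c₁ - z) ^ 2 ≤ (c₁ - c₀)⁻¹`).
A function with `L`-Lipschitz derivative satisfies the second-order Taylor bound
`|f (a + b) - f a - f' a * b| ≤ L / 2 * b ^ 2`, which we integrate over `Ω₁` with `a = u x`,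
`b = h x`. The same bound at `a = 0` shows that `f` grows at most quadratically, so all the
integrals involved are finite for `u, h ∈ L²` of a finite measure.
-/

open MeasureTheory Set
open scoped NNReal

noncomputable def phi (c₀ c₁ : ℝ) (z : ℝ) : ℝ :=
  if z ≤ c₀ then (c₀ - z) / (c₁ - z) else 0

noncomputable def F (c₀ c₁ : ℝ) (s : ℝ) : ℝ :=
  if s ≤ c₀ then s + (c₁ - c₀) * Real.log ((c₁ - s) / c₁)
  else c₀ + (c₁ - c₀) * Real.log ((c₁ - c₀) / c₁)

noncomputable def G (c₀ c₁ : ℝ) {Ω : Type*} [MeasurableSpace Ω] (μ : Measure Ω)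
    (Ω₁ : Set Ω) (u : Lp ℝ 2 μ) : ℝ :=
  ∫ x in Ω₁, F c₀ c₁ (u x) ∂μ

theorem abs_sub_sub_mul_le_of_lipschitzWith_deriv {f f' : ℝ → ℝ} {L : ℝ≥0}
    (hf : ∀ x, HasDerivAt f (f' x) x) (hf' : LipschitzWith L f') (a b : ℝ) :
    |f (a + b) - f a - f' a * b| ≤ L / 2 * b ^ 2 := by
  set g : ℝ → ℝ := fun t => f (a + t * b) - f a - t * (f' a * b)
  have hg : ∀ t, HasDerivAt g ((f' (a + t * b) - f' a) * b) t := fun t => by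
    have hline : HasDerivAt (fun t => a + t * b) b t := by
      simpa using ((hasDerivAt_id t).mul_const b).const_add a
    exact ((((hf _).comp t hline).sub_const (f a)).sub
      ((hasDerivAt_id t).mul_const (f' a * b))).congr_deriv (by ring)
  have hB : ∀ t, HasDerivAt (fun t => L / 2 * b ^ 2 * t ^ 2) (L * b ^ 2 * t) t := fun t =>
    ((hasDerivAt_pow 2 t).const_mul (L / 2 * b ^ 2 : ℝ)).congr_deriv (by
      simp only [Nat.cast_ofNat, Nat.add_one_sub_one, pow_one]; ring)
  have key := image_norm_le_of_norm_deriv_right_le_deriv_boundary (a := 0) (b := 1)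
    (fun t _ => (hg t).continuousAt.continuousWithinAt) (fun t _ => (hg t).hasDerivWithinAt)
    (by simp [g]) hB (fun t ht => by
      rw [Real.norm_eq_abs, abs_mul]
      calc |f' (a + t * b) - f' a| * |b| ≤ L * |a + t * b - a| * |b| := by
            gcongr; exact hf'.dist_le_mul _ _
        _ = L * b ^ 2 * t := by
            rw [add_sub_cancel_left, abs_mul, abs_of_nonneg ht.1, ← sq_abs b]; ring)
    (right_mem_Icc.2 zero_le_one)
  simpa [g] using key

section Integral

variable {Ω : Type*} [MeasurableSpace Ω] {μ : Measure Ω} [IsFiniteMeasure μ]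

lemma LipschitzWith.comp_memLp_of_isFiniteMeasure {E F : Type*} [NormedAddCommGroup E]
    [NormedAddCommGroup F] {K : ℝ≥0} {g : E → F} (hg : LipschitzWith K g) {p : ENNReal}
    {u : Ω → E} (hu : MemLp u p μ) : MemLp (fun x => g (u x)) p μ := by
  have h0 : LipschitzWith (K + 0) (fun z => g z - g 0) := hg.sub (LipschitzWith.const _)
  convert (h0.comp_memLp (sub_self _) hu).add (memLp_const (g 0)) using 1
  ext x
  simp

variable {f f' : ℝ → ℝ} {L : ℝ≥0}

lemma integrable_comp_of_lipschitzWith_deriv (hf : ∀ x, HasDerivAt f (f' x) x)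
    (hf' : LipschitzWith L f') {u : Ω → ℝ} (hu : MemLp u 2 μ) :
    Integrable (fun x => f (u x)) μ := by
  have hcont : Continuous f := continuous_iff_continuousAt.2 fun x => (hf x).continuousAt
  refine ((integrable_const |f 0|).add (((hu.integrable one_le_two).abs.const_mul |f' 0|).add
    (hu.integrable_sq.const_mul (L / 2)))).mono' (hcont.comp_aestronglyMeasurable hu.1)
    (ae_of_all _ fun x => ?_)
  have hT := abs_le.1 (abs_sub_sub_mul_le_of_lipschitzWith_deriv hf hf' 0 (u x))
  rw [zero_add] at hT
  simp only [Real.norm_eq_abs, Pi.add_apply, ← abs_mul]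
  refine abs_le.2 ⟨?_, ?_⟩ <;>
    linarith [le_abs_self (f 0), neg_abs_le (f 0), le_abs_self (f' 0 * u x),
      neg_abs_le (f' 0 * u x)]

theorem abs_integral_comp_add_sub_sub_le (hf : ∀ x, HasDerivAt f (f' x) x)
    (hf' : LipschitzWith L f') {u h : Ω → ℝ} (hu : MemLp u 2 μ) (hh : MemLp h 2 μ) :
    |∫ x, f (u x + h x) ∂μ - ∫ x, f (u x) ∂μ - ∫ x, f' (u x) * h x ∂μ| ≤
      L / 2 * ∫ x, h x ^ 2 ∂μ := by
  have hfuh : Integrable (fun x => f (u x + h x)) μ :=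
    integrable_comp_of_lipschitzWith_deriv hf hf' (hu.add hh)
  have hfu := integrable_comp_of_lipschitzWith_deriv hf hf' hu
  have hf'u_h : Integrable (fun x => f' (u x) * h x) μ :=
    (hf'.comp_memLp_of_isFiniteMeasure hu).integrable_mul hh
  have hdiff : Integrable (fun x => f (u x + h x) - f (u x)) μ := hfuh.sub hfu
  rw [← integral_sub hfuh hfu, ← integral_sub hdiff hf'u_h, ← integral_const_mul]
  exact abs_integral_le_integral_abs.trans <| integral_mono_of_nonneg
    (ae_of_all _ fun _ => abs_nonneg _) (hh.integrable_sq.const_mul _)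
    (ae_of_all _ fun x => abs_sub_sub_mul_le_of_lipschitzWith_deriv hf hf' (u x) (h x))

end Integral

lemma MeasureTheory.L2.integral_sq_eq_sq_norm {Ω : Type*} [MeasurableSpace Ω] {μ : Measure Ω}
    (h : Lp ℝ 2 μ) : ∫ x, h x ^ 2 ∂μ = ‖h‖ ^ 2 := by
  rw [← real_inner_self_eq_norm_sq, L2.inner_def]
  simp [sq]

section Phi

variable {c₀ c₁ : ℝ}

lemma phi_eq_div_min (z : ℝ) : phi c₀ c₁ z = (c₀ - min z c₀) / (c₁ - min z c₀) := by
  unfold phi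
  split_ifs with hz
  · rw [min_eq_left hz]
  · rw [min_eq_right (le_of_not_ge hz), sub_self, zero_div]

lemma lipschitzWith_phi (hc : c₀ < c₁) : LipschitzWith (c₁ - c₀).toNNReal⁻¹ (phi c₀ c₁) := by
  have hd : 0 < c₁ - c₀ := sub_pos.2 hc
  refine LipschitzWith.of_dist_le_mul fun z w => ?_
  rw [NNReal.coe_inv, Real.coe_toNNReal _ hd.le, phi_eq_div_min, phi_eq_div_min, Real.dist_eq,
    Real.dist_eq]
  set a := min z c₀
  set b := min w c₀
  have ha : c₁ - c₀ ≤ c₁ - a := by gcongr; exact min_le_right _ _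
  have hb : c₁ - c₀ ≤ c₁ - b := by gcongr; exact min_le_right _ _
  have hpos : 0 < (c₁ - a) * (c₁ - b) := mul_pos (hd.trans_le ha) (hd.trans_le hb)
  have hab : |a - b| ≤ |z - w| := by simpa using abs_min_sub_min_le_max z c₀ w c₀
  have hnum : (c₀ - a) * (c₁ - b) - (c₁ - a) * (c₀ - b) = (c₁ - c₀) * (b - a) := by ring
  calc |(c₀ - a) / (c₁ - a) - (c₀ - b) / (c₁ - b)|
      = (c₁ - c₀) * |a - b| / ((c₁ - a) * (c₁ - b)) := by
        rw [div_sub_div _ _ (hd.trans_le ha).ne' (hd.trans_le hb).ne', hnum, abs_div, abs_mul,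
          abs_of_pos hd, abs_sub_comm b a, abs_of_pos hpos]
    _ ≤ (c₁ - c₀) * |a - b| / ((c₁ - c₀) * (c₁ - c₀)) := by gcongr; linarith
    _ ≤ (c₁ - c₀)⁻¹ * |z - w| := by
        rw [mul_div_mul_left _ _ hd.ne', div_eq_inv_mul]; gcongr

lemma hasDerivAt_F_left_branch (hc₁ : 0 < c₁) {s : ℝ} (hs : s < c₁) :
    HasDerivAt (fun s => s + (c₁ - c₀) * Real.log ((c₁ - s) / c₁)) ((c₀ - s) / (c₁ - s)) s := by
  have hlog : HasDerivAt (fun s => Real.log ((c₁ - s) / c₁)) ((-1 / c₁) / ((c₁ - s) / c₁)) s :=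
    (((hasDerivAt_id s).const_sub c₁).div_const c₁).log
      (div_pos (sub_pos.2 hs) hc₁).ne'
  exact ((hasDerivAt_id s).add (hlog.const_mul (c₁ - c₀))).congr_deriv (by
    field_simp [(sub_pos.2 hs).ne']; ring)

lemma hasDerivAt_F (hc₀ : 0 < c₀) (hc : c₀ < c₁) (s : ℝ) :
    HasDerivAt (F c₀ c₁) (phi c₀ c₁ s) s := by
  have hc₁ : 0 < c₁ := hc₀.trans hc
  have hF_of_ge : ∀ t ∈ Ici c₀, F c₀ c₁ t = F c₀ c₁ c₀ := fun t ht => by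
    rcases (mem_Ici.1 ht).eq_or_lt with rfl | ht
    · rfl
    · rw [F, F, if_neg ht.not_ge, if_pos le_rfl]
  rcases lt_trichotomy s c₀ with hs | hs | hs
  · rw [phi, if_pos hs.le]
    refine (hasDerivAt_F_left_branch hc₁ (hs.trans hc)).congr_of_eventuallyEq ?_
    filter_upwards [eventually_lt_nhds hs] with t ht
    rw [F, if_pos ht.le]
  · subst s
    have hleft : HasDerivWithinAt (F c₀ c₁) (phi c₀ c₁ c₀) (Iic c₀) c₀ := by
      rw [phi, if_pos le_rfl]
      exact (hasDerivAt_F_left_branch hc₁ hc).hasDerivWithinAt.congr (fun t ht => if_pos ht)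
        (if_pos le_rfl)
    have hright : HasDerivWithinAt (F c₀ c₁) (phi c₀ c₁ c₀) (Ici c₀) c₀ := by
      rw [phi, if_pos le_rfl, sub_self, zero_div]
      exact (hasDerivWithinAt_const _ _ _).congr hF_of_ge (hF_of_ge c₀ self_mem_Ici)
    simpa using hleft.union hright
  · rw [phi, if_neg hs.not_ge]
    refine (hasDerivAt_const s (F c₀ c₁ c₀)).congr_of_eventuallyEq ?_
    filter_upwards [eventually_gt_nhds hs] with t ht using hF_of_ge t ht.le

end Phi

theorem G_taylor_bound_general (c₀ c₁ : ℝ) (hc₀ : 0 < c₀) (hc : c₀ < c₁)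
    {Ω : Type*} [MeasurableSpace Ω] (μ : Measure Ω) [IsFiniteMeasure μ]
    (Ω₁ : Set Ω) (u h : Lp ℝ 2 μ) :
    |G c₀ c₁ μ Ω₁ (u + h) - G c₀ c₁ μ Ω₁ u - ∫ x in Ω₁, phi c₀ c₁ (u x) * h x ∂μ| ≤
      ‖h‖ ^ 2 / (2 * (c₁ - c₀)) := by
  have hG : G c₀ c₁ μ Ω₁ (u + h) = ∫ x in Ω₁, F c₀ c₁ (u x + h x) ∂μ :=
    integral_congr_ae <| ae_restrict_of_ae <| by
      filter_upwards [Lp.coeFn_add u h] with x hx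
      rw [hx, Pi.add_apply]
  have hsq : ∫ x in Ω₁, h x ^ 2 ∂μ ≤ ‖h‖ ^ 2 := L2.integral_sq_eq_sq_norm h ▸
    setIntegral_le_integral (Lp.memLp h).integrable_sq (ae_of_all _ fun x => sq_nonneg (h x))
  calc _ ≤ (c₁ - c₀).toNNReal⁻¹ / 2 * ∫ x in Ω₁, h x ^ 2 ∂μ := by
        rw [hG]
        exact abs_integral_comp_add_sub_sub_le (hasDerivAt_F hc₀ hc) (lipschitzWith_phi hc)
          ((Lp.memLp u).restrict Ω₁) ((Lp.memLp h).restrict Ω₁)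
    _ ≤ (c₁ - c₀)⁻¹ / 2 * ‖h‖ ^ 2 := by
        rw [NNReal.coe_inv, Real.coe_toNNReal _ (sub_pos.2 hc).le]
        gcongr
    _ = ‖h‖ ^ 2 / (2 * (c₁ - c₀)) := by field_simp

theorem G_taylor_bound (c₀ c₁ : ℝ) (hc₀ : 0 < c₀) (hc : c₀ < c₁)
    {Ω : Type*} [MeasurableSpace Ω] (μ : Measure Ω) [IsFiniteMeasure μ]
    (Ω₁ : Set Ω) (hΩ₁ : MeasurableSet Ω₁) (u h : Lp ℝ 2 μ) :
    |G c₀ c₁ μ Ω₁ (u + h) - G c₀ c₁ μ Ω₁ u - ∫ x in Ω₁, phi c₀ c₁ (u x) * h x ∂μ| ≤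
      ‖h‖ ^ 2 / (2 * (c₁ - c₀)) :=
  G_taylor_bound_general c₀ c₁ hc₀ hc μ Ω₁ u h
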